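/- arXiv:1505.01657 — 3 statements merged into one kernel-verified Lean document; each statement's English description precedes it below -/
import Mathlib

section
/- For z_1,...,z_N distinct elements of a field and 1 ≤ α ≤ N, the sum over all α-element subsets I of {1,...,N} of the product ∏_{i∈I, j∉I} z_i/(z_i - z_j) equals 1. -/
/-!
Write `w(s, I) = ∏_{i ∈ I, j ∈ s \ I} z_i / (z_i - z_j)`. Evaluating `∑_k L_k = 1` for the
Lagrange basis of a node set `C` at `0` gives `∑_{k ∈ C} ∏_{j ∈ C \ {k}} z_j / (z_j - z_k) = 1`.
Inserting this identity for `C = s \ I` into each term, and moving `k` from the complement of `I`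
out of `s`, turns `w(s, I)` into `∑_{k ∉ I}` of the Lagrange weight of `k` in all of `s` times
`w(s \ {k}, I)`. Exchanging the sums, induction on `s` makes the inner sums `1`, and the outer sum
is the Lagrange identity for `s` once more.
-/

open Finset Polynomial

section

variable {ι K : Type*} [DecidableEq ι] [Field K]

theorem Lagrange.sum_prod_erase_div_sub_eq_one {s : Finset ι} {v : ι → K}
    (hvs : Set.InjOn v s) (hs : s.Nonempty) :
    ∑ k ∈ s, ∏ j ∈ s.erase k, v j / (v j - v k) = 1 := by
  have h := congrArg (eval 0) (Lagrange.sum_basis hvs hs)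
  simp only [Lagrange.basis, Lagrange.basisDivisor, eval_finsetSum, eval_prod, eval_mul,
    eval_C, eval_sub, eval_X, zero_sub, eval_one] at h
  rw [← h]
  refine sum_congr rfl fun k _ => prod_congr rfl fun j _ => ?_
  rw [mul_neg, ← neg_mul, ← inv_neg, neg_sub, inv_mul_eq_div]

def subsetWeight (z : ι → K) (s I : Finset ι) : K :=
  ∏ i ∈ I, ∏ j ∈ s \ I, z i / (z i - z j)

theorem mul_subsetWeight_eq {z : ι → K} {s I : Finset ι} (hI : I ⊆ s) {k : ι}
    (hk : k ∈ s \ I) :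
    (∏ j ∈ (s \ I).erase k, z j / (z j - z k)) * subsetWeight z s I
      = (∏ j ∈ s.erase k, z j / (z j - z k)) * subsetWeight z (s.erase k) I := by
  have hIk : I ⊆ s.erase k := subset_erase.mpr ⟨hI, (mem_sdiff.mp hk).2⟩
  unfold subsetWeight
  rw [← prod_sdiff hIk, erase_sdiff_comm]
  simp_rw [← mul_prod_erase _ _ hk, prod_mul_distrib]
  ring

theorem sum_powersetCard_subsetWeight {z : ι → K} {s : Finset ι} (hz : Set.InjOn z s)
    {α : ℕ} (hα : α ≤ #s) : ∑ I ∈ s.powersetCard α, subsetWeight z s I = 1 := by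
  induction s using Finset.strongInduction generalizing α with
  | H s ih =>
  rcases hα.eq_or_lt with rfl | hlt
  · simp [subsetWeight]
  calc ∑ I ∈ s.powersetCard α, subsetWeight z s I
      = ∑ I ∈ s.powersetCard α, ∑ k ∈ s \ I,
          (∏ j ∈ (s \ I).erase k, z j / (z j - z k)) * subsetWeight z s I := by
        refine sum_congr rfl fun I hI => ?_
        obtain ⟨hIs, hIα⟩ := mem_powersetCard.mp hI
        rw [← sum_mul, Lagrange.sum_prod_erase_div_sub_eq_one (hz.mono (by simp)), one_mul]
        rw [← card_pos, card_sdiff_of_subset hIs]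
        omega
    _ = ∑ I ∈ s.powersetCard α, ∑ k ∈ s \ I,
          (∏ j ∈ s.erase k, z j / (z j - z k)) * subsetWeight z (s.erase k) I :=
        sum_congr rfl fun I hI => sum_congr rfl fun k hk =>
          mul_subsetWeight_eq (mem_powersetCard.mp hI).1 hk
    _ = ∑ k ∈ s, ∑ I ∈ (s.erase k).powersetCard α,
          (∏ j ∈ s.erase k, z j / (z j - z k)) * subsetWeight z (s.erase k) I := by
        refine sum_comm' fun I k => ?_
        simp only [mem_powersetCard, mem_sdiff, subset_erase]
        tauto
    _ = 1 := by
        rw [← Lagrange.sum_prod_erase_div_sub_eq_one hz (card_pos.mp (by omega))]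
        refine sum_congr rfl fun k hk => ?_
        have hαk : α ≤ #(s.erase k) := by rw [card_erase_of_mem hk]; omega
        rw [← mul_sum, ih _ (erase_ssubset hk) (hz.mono (by simp)) hαk, mul_one]

end

theorem stmt_2_general {K : Type*} [Field K] (N : ℕ) (α : ℕ) (hαN : α ≤ N)
    (z : Fin N → K) (hz : Function.Injective z) :
    ∑ I ∈ Finset.powersetCard α (Finset.univ : Finset (Fin N)),
      ∏ i ∈ I, ∏ j ∈ Iᶜ, z i / (z i - z j) = 1 := by
  simpa only [subsetWeight, compl_eq_univ_sdiff] using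
    sum_powersetCard_subsetWeight hz.injOn (s := univ) (by simpa using hαN)

/-- For pairwise distinct `z_1,...,z_N` in a field and `1 ≤ α ≤ N`,
`∑_{|I|=α} ∏_{i∈I, j∉I} z_i/(z_i - z_j) = 1`. -/
theorem stmt_2 {K : Type*} [Field K] (N : ℕ) (α : ℕ) (hα1 : 1 ≤ α) (hαN : α ≤ N)
    (z : Fin N → K) (hz : Function.Injective z) :
    ∑ I ∈ Finset.powersetCard α (Finset.univ : Finset (Fin N)),
      ∏ i ∈ I, ∏ j ∈ Iᶜ, z i / (z i - z j) = 1 :=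
  stmt_2_general N α hαN z hz
end

section
/- Fix an integer a ≥ 1, a field element q, and pairwise distinct nonzero z_1,...,z_{2a} with z_j ≠ q·z_i for i ≠ j. Then Σ_{(I,J): I⊔J=[1,2a], |I|=|J|=a} a_{I,J}(z)·b_{J,I}(z)·(1 − q^a·z_I/z_J) = Σ_{(I,J): I⊔J=[1,2a], |I|=a+1, |J|=a−1} a_{I,J}(z)·b_{J,I}(z). -/
/-!
Write `a_{I,J} b_{J,I}` as the product over `I × J` of the pair factors
`z_i/(z_i - z_l) · z_l/(z_l - q z_i)`. Both sides then become double sums over pairs `(A, j)` with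
`|A| = a` and `j ∉ A`, and they agree termwise.

On the left, `1 - q^a z_A/z_{Aᶜ} = ∑_{j ∉ A} insertWeight A j` is Lagrange interpolation of
the monic polynomial `∏_{i ∈ A} (t - q z_i)`, of degree `a`, at the `a + 1` nodes `{0} ∪ z(Aᶜ)`,
read off at the coefficient of `t^a`. On the right, for `|I| = a + 1`,
`1 = ∑_{j ∈ I} eraseWeight I j` is the same interpolation of `∏_{l ∉ I} (z_l - q t)`, of degree
`a - 1`, at the nodes `{0} ∪ z(I)`. Moving `j` from `Aᶜ` to `A` only changes the pair factors
involving `j`, and this change is exactly the ratio `insertWeight A j / eraseWeight (A ∪ {j}) j`.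
-/

open Finset Polynomial

theorem Lagrange.coeff_card_eq_eval_zero_div_add_sum {F ι : Type*} [Field F] [DecidableEq ι]
    {s : Finset ι} {v : ι → F} (hvs : Set.InjOn v s) (hv0 : ∀ i ∈ s, v i ≠ 0) {P : F[X]}
    (hP : P.degree ≤ #s) :
    P.coeff #s = P.eval 0 / ∏ i ∈ s, -v i
      + ∑ i ∈ s, P.eval (v i) / (v i * ∏ j ∈ s.erase i, (v i - v j)) := by
  have hnone : none ∉ s.map .some := by simp
  have hinj : Set.InjOn (fun o : Option ι => o.elim 0 v)
      ((insert none (s.map .some) : Finset (Option ι)) : Set (Option ι)) := by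
    rintro (_ | i) hi (_ | j) hj h <;> simp_all [eq_comm, hvs.eq_iff]
  have h := Lagrange.coeff_eq_sum hinj (P := P)
    (hP.trans_lt (by rw [card_insert_of_notMem hnone, card_map]; exact_mod_cast Nat.lt_succ_self _))
  rw [card_insert_of_notMem hnone, card_map, Nat.add_sub_cancel] at h
  rw [h, sum_insert hnone, sum_map, erase_insert hnone, prod_map]
  congr 1
  · simp
  · refine sum_congr rfl fun i hi => ?_
    rw [erase_insert_of_ne (by simp), ← map_erase, prod_insert (by simp), prod_map]
    simp

theorem Finset.sum_powersetCard_sum_compl_insert {ι M : Type*} [Fintype ι] [DecidableEq ι]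
    [AddCommMonoid M] (k : ℕ) (f : Finset ι → ι → M) :
    ∑ A ∈ powersetCard k univ, ∑ j ∈ Aᶜ, f (insert j A) j
      = ∑ I ∈ powersetCard (k + 1) univ, ∑ j ∈ I, f I j := by
  rw [sum_sigma', sum_sigma']
  refine sum_nbij' (fun x => ⟨insert x.2 x.1, x.2⟩) (fun x => ⟨x.1.erase x.2, x.2⟩)
    ?_ ?_ ?_ ?_ fun _ _ => rfl
  · rintro ⟨A, j⟩ h
    simp_all [card_insert_of_notMem]
  · rintro ⟨I, j⟩ h
    simp_all [card_erase_of_mem]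
  · rintro ⟨A, j⟩ h
    simp_all
  · rintro ⟨I, j⟩ h
    simp_all

namespace PartitionSum

variable {K ι : Type*} [Field K] (q : K) (z : ι → K)

def pairWeight (i l : ι) : K := z i / (z i - z l) * (z l / (z l - q * z i))

theorem prod_pairWeight_left (A : Finset ι) (j : ι) :
    ∏ i ∈ A, pairWeight q z i j
      = (∏ i ∈ A, z i) * z j ^ #A / ((∏ i ∈ A, (z i - z j)) * ∏ i ∈ A, (z j - q * z i)) := by
  simp only [pairWeight, prod_mul_distrib, prod_div_distrib, prod_const]
  ring

theorem prod_pairWeight_right (C : Finset ι) (j : ι) :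
    ∏ l ∈ C, pairWeight q z j l
      = z j ^ #C * (∏ l ∈ C, z l) / ((∏ l ∈ C, (z j - z l)) * ∏ l ∈ C, (z l - q * z j)) := by
  simp only [pairWeight, prod_mul_distrib, prod_div_distrib, prod_const]
  ring

variable [Fintype ι] [DecidableEq ι]

def crossWeight (I : Finset ι) : K := ∏ i ∈ I, ∏ l ∈ Iᶜ, pairWeight q z i l

def insertWeight (A : Finset ι) (j : ι) : K :=
  (∏ i ∈ A, (z j - q * z i)) / (z j * ∏ l ∈ Aᶜ.erase j, (z j - z l))

def eraseWeight (I : Finset ι) (j : ι) : K :=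
  -(∏ i ∈ I, -z i) / (∏ l ∈ Iᶜ, z l) *
    ((∏ l ∈ Iᶜ, (z l - q * z j)) / (z j * ∏ i ∈ I.erase j, (z j - z i)))

theorem prod_prod_mul_prod_prod_eq_crossWeight (I : Finset ι) :
    (∏ i ∈ I, ∏ l ∈ Iᶜ, z i / (z i - z l)) * (∏ l ∈ Iᶜ, ∏ i ∈ I, z l / (z l - q * z i))
      = crossWeight q z I := by
  rw [prod_comm (s := Iᶜ), ← prod_mul_distrib]
  exact prod_congr rfl fun i _ => (prod_mul_distrib ..).symm

theorem crossWeight_insert_mul {A : Finset ι} {j : ι} (hj : j ∉ A) :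
    crossWeight q z (insert j A) * ∏ i ∈ A, pairWeight q z i j
      = crossWeight q z A * ∏ l ∈ (insert j A)ᶜ, pairWeight q z j l := by
  have hsplit (i : ι) : ∏ l ∈ Aᶜ, pairWeight q z i l
      = pairWeight q z i j * ∏ l ∈ (insert j A)ᶜ, pairWeight q z i l := by
    rw [compl_insert, mul_prod_erase _ _ (mem_compl.mpr hj)]
  rw [crossWeight, crossWeight, prod_insert hj, prod_congr rfl fun i _ => hsplit i,
    prod_mul_distrib]
  ring

variable {z} (hz : Function.Injective z) (hz0 : ∀ i, z i ≠ 0)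
include hz hz0

theorem sum_insertWeight {A : Finset ι} (hA : #A = #Aᶜ) :
    ∑ j ∈ Aᶜ, insertWeight q z A j = 1 - q ^ #A * (∏ i ∈ A, z i) / ∏ l ∈ Aᶜ, z l := by
  set P := Lagrange.nodal A (q * z ·)
  have hdeg : P.natDegree = #Aᶜ := by rw [Lagrange.natDegree_nodal, hA]
  have h := Lagrange.coeff_card_eq_eval_zero_div_add_sum hz.injOn (fun i _ => hz0 i)
    (hdeg ▸ degree_le_natDegree)
  rw [← hdeg, Lagrange.nodal_monic.coeff_natDegree] at h
  simp only [P, Lagrange.eval_nodal, zero_sub, prod_neg, prod_mul_distrib, prod_const, ← hA] at h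
  rw [mul_div_mul_left _ _ (pow_ne_zero _ (neg_ne_zero.mpr one_ne_zero))] at h
  exact eq_sub_of_add_eq' h.symm

theorem sum_eraseWeight {I : Finset ι} (hI : #Iᶜ < #I) : ∑ j ∈ I, eraseWeight q z I j = 1 := by
  set P : K[X] := ∏ l ∈ Iᶜ, (C (z l) - C q * X)
  have hdeg : P.natDegree ≤ #Iᶜ := by
    refine (natDegree_prod_le _ _).trans ?_
    have hlin (l : ι) : (C (z l) - C q * X).natDegree ≤ 1 := by compute_degree
    simpa using sum_le_card_nsmul Iᶜ _ 1 fun l _ => hlin l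
  have h := Lagrange.coeff_card_eq_eval_zero_div_add_sum hz.injOn (fun i _ => hz0 i)
    (degree_le_of_natDegree_le (hdeg.trans hI.le))
  rw [coeff_eq_zero_of_natDegree_lt (hdeg.trans_lt hI)] at h
  simp only [P, eval_prod, eval_sub, eval_C, eval_mul, eval_X, mul_zero, sub_zero] at h
  have hIc : ∏ l ∈ Iᶜ, z l ≠ 0 := prod_ne_zero_iff.mpr fun l _ => hz0 l
  have hI0 : ∏ i ∈ I, -z i ≠ 0 := prod_ne_zero_iff.mpr fun i _ => neg_ne_zero.mpr (hz0 i)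
  simp only [eraseWeight, ← mul_sum]
  field_simp at h ⊢
  linear_combination h

variable (hzq : ∀ i j, i ≠ j → z j ≠ q * z i)
include hzq

theorem insertWeight_mul_prod_pairWeight {A : Finset ι} {j : ι} (hA : #A = #Aᶜ) (hj : j ∉ A) :
    insertWeight q z A j * ∏ i ∈ A, pairWeight q z i j
      = (∏ l ∈ (insert j A)ᶜ, pairWeight q z j l) * eraseWeight q z (insert j A) j := by
  rw [insertWeight, eraseWeight, compl_insert, prod_insert hj, erase_insert hj]
  set C := Aᶜ.erase j
  have hcard : #A = #C + 1 := by rw [hA, card_erase_add_one (mem_compl.mpr hj)]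
  have hne (i : ι) (hi : i ∈ A) : i ≠ j := ne_of_mem_of_not_mem hi hj
  have hneC (l : ι) (hl : l ∈ C) : l ≠ j := ne_of_mem_erase hl
  have h1 : ∏ i ∈ A, (z j - z i) ≠ 0 :=
    prod_ne_zero_iff.mpr fun i hi => sub_ne_zero.mpr (hz.ne (hne i hi).symm)
  have h2 : ∏ i ∈ A, (z j - q * z i) ≠ 0 :=
    prod_ne_zero_iff.mpr fun i hi => sub_ne_zero.mpr (hzq i j (hne i hi))
  have h3 : ∏ l ∈ C, (z j - z l) ≠ 0 :=
    prod_ne_zero_iff.mpr fun l hl => sub_ne_zero.mpr (hz.ne (hneC l hl).symm)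
  have h4 : ∏ l ∈ C, (z l - q * z j) ≠ 0 :=
    prod_ne_zero_iff.mpr fun l hl => sub_ne_zero.mpr (hzq j l (hneC l hl).symm)
  have h5 : ∏ l ∈ C, z l ≠ 0 := prod_ne_zero_iff.mpr fun l _ => hz0 l
  have h6 : ∏ i ∈ A, z i ≠ 0 := prod_ne_zero_iff.mpr fun i _ => hz0 i
  have hzj := hz0 j
  have hswap : ∏ i ∈ A, (z i - z j) = (-1) ^ #A * ∏ i ∈ A, (z j - z i) := by
    rw [← prod_neg]; exact prod_congr rfl fun _ _ => (neg_sub _ _).symm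
  rw [prod_pairWeight_left, prod_pairWeight_right, hswap, prod_neg, hcard]
  generalize ∏ l ∈ C, (z l - q * z j) = P at h4 ⊢
  field_simp
  rw [← pow_mul, pow_mul', neg_one_sq, one_pow]
  ring

theorem crossWeight_mul_insertWeight {A : Finset ι} {j : ι} (hA : #A = #Aᶜ) (hj : j ∉ A) :
    crossWeight q z A * insertWeight q z A j
      = crossWeight q z (insert j A) * eraseWeight q z (insert j A) j := by
  have hpair : ∏ i ∈ A, pairWeight q z i j ≠ 0 := prod_ne_zero_iff.mpr fun i hi => by
    have hij := ne_of_mem_of_not_mem hi hj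
    exact mul_ne_zero (div_ne_zero (hz0 i) (sub_ne_zero.mpr (hz.ne hij)))
      (div_ne_zero (hz0 j) (sub_ne_zero.mpr (hzq i j hij)))
  refine mul_right_cancel₀ hpair ?_
  rw [mul_assoc, insertWeight_mul_prod_pairWeight q hz hz0 hzq hA hj, ← mul_assoc,
    ← crossWeight_insert_mul q z hj]
  ring

end PartitionSum

open PartitionSum in
theorem stmt_5_general {K : Type*} [Field K] (a : ℕ) (q : K)
    (z : Fin (2 * a) → K) (hz : Function.Injective z) (hz0 : ∀ i, z i ≠ 0)
    (hzq : ∀ i j, i ≠ j → z j ≠ q * z i) :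
    ∑ I ∈ Finset.powersetCard a (Finset.univ : Finset (Fin (2 * a))),
      (∏ i ∈ I, ∏ j ∈ Iᶜ, z i / (z i - z j)) *
        (∏ j ∈ Iᶜ, ∏ i ∈ I, z j / (z j - q * z i)) *
        (1 - q ^ a * (∏ i ∈ I, z i) / (∏ j ∈ Iᶜ, z j))
    = ∑ I ∈ Finset.powersetCard (a + 1) (Finset.univ : Finset (Fin (2 * a))),
        (∏ i ∈ I, ∏ j ∈ Iᶜ, z i / (z i - z j)) *
          (∏ j ∈ Iᶜ, ∏ i ∈ I, z j / (z j - q * z i)) := by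
  simp only [prod_prod_mul_prod_prod_eq_crossWeight]
  have hcard {k : ℕ} {I : Finset (Fin (2 * a))} (hI : I ∈ powersetCard k univ) :
      #Iᶜ = 2 * a - k := by
    rw [card_compl, Fintype.card_fin, mem_powersetCard_univ.mp hI]
  calc _ = ∑ A ∈ powersetCard a univ, ∑ j ∈ Aᶜ,
          crossWeight q z (insert j A) * eraseWeight q z (insert j A) j := by
        refine sum_congr rfl fun A hA => ?_
        have hAc : #A = #Aᶜ := by rw [hcard hA, mem_powersetCard_univ.mp hA]; omega
        have hsum := sum_insertWeight q hz hz0 hAc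
        rw [mem_powersetCard_univ.mp hA] at hsum
        rw [← hsum, mul_sum]
        exact sum_congr rfl fun j hj =>
          crossWeight_mul_insertWeight q hz hz0 hzq hAc (mem_compl.mp hj)
    _ = ∑ I ∈ powersetCard (a + 1) univ, ∑ j ∈ I, crossWeight q z I * eraseWeight q z I j :=
        sum_powersetCard_sum_compl_insert a fun I j => crossWeight q z I * eraseWeight q z I j
    _ = _ := sum_congr rfl fun I hI => by
        have hIc : #Iᶜ < #I := by rw [hcard hI, mem_powersetCard_univ.mp hI]; omega
        rw [← mul_sum, sum_eraseWeight q hz hz0 hIc, mul_one]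

/-- second summation lemma: for `a ≥ 1` and generic `z_1,...,z_{2a}`,
`∑_{|I|=|J|=a} a_{I,J} b_{J,I} (1 − q^a z_I/z_J) = ∑_{|I|=a+1,|J|=a−1} a_{I,J} b_{J,I}`,
where pairs `(I,J)` are disjoint with `I ∪ J = [1,2a]`. -/
theorem stmt_5 {K : Type*} [Field K] (a : ℕ) (ha : 1 ≤ a) (q : K)
    (z : Fin (2 * a) → K) (hz : Function.Injective z) (hz0 : ∀ i, z i ≠ 0)
    (hzq : ∀ i j, i ≠ j → z j ≠ q * z i) :
    ∑ I ∈ Finset.powersetCard a (Finset.univ : Finset (Fin (2 * a))),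
      (∏ i ∈ I, ∏ j ∈ Iᶜ, z i / (z i - z j)) *
        (∏ j ∈ Iᶜ, ∏ i ∈ I, z j / (z j - q * z i)) *
        (1 - q ^ a * (∏ i ∈ I, z i) / (∏ j ∈ Iᶜ, z j))
    = ∑ I ∈ Finset.powersetCard (a + 1) (Finset.univ : Finset (Fin (2 * a))),
        (∏ i ∈ I, ∏ j ∈ Iᶜ, z i / (z i - z j)) *
          (∏ j ∈ Iᶜ, ∏ i ∈ I, z j / (z j - q * z i)) :=
  stmt_5_general a q z hz hz0 hzq
end

section
/- For 1 ≤ α ≤ r and 1 ≤ p ≤ r+1−α, the operator 𝒟_{α,−p} annihilates the constant function 1, and 𝒟_{α,0}·1 = v^{−Σ_β Λ_{α,β}}. Equivalently, M_{α,−p}·1 = 0 for 1 ≤ p ≤ r+1−α and M_{α,0}·1 = 1. -/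
/-! With `c_i = ∏_{j ≠ i} (z_i - z_j)⁻¹` and `m = r + 1 - α - p`, the term of `I` in
`M_{α,-p} 1` is `∏_{i ∈ I} c_i z_i^m ∏_{j ∈ I, j ≠ i} (z_i - z_j)`, a product of two Vandermonde
minors on the columns `I`. By Cauchy–Binet the sum is `det (A B)` with `A = (c_i z_i^{m+a})` and
`B = (z_i^{α-1-b})`. The entries of `A B` are the Lagrange power sums `∑_i c_i z_i^s = [s = r]`
(`s ≤ r`), so `A B` is lower triangular with diagonal entries `[m = r + 1 - α]`. -/

/-- `Λ_{α,β} = min(α,β)(r+1−max(α,β))` for `α,β ∈ {1,...,r}`, extended by `0` outside. -/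
def Lam (r α β : ℕ) : ℤ :=
  if 1 ≤ α ∧ α ≤ r ∧ 1 ≤ β ∧ β ≤ r then
    (min α β : ℤ) * ((r : ℤ) + 1 - (max α β : ℤ)) else 0

/-- `a_I(z) = ∏_{i∈I, j∉I} z_i/(z_i − z_j)`. -/
noncomputable def aI {K : Type*} [Field K] {N : ℕ} (z : Fin N → K) (I : Finset (Fin N)) : K :=
  ∏ i ∈ I, ∏ j ∈ Iᶜ, z i / (z i - z j)

/-- The generalized (degenerate) Macdonald operator
`𝒟_{α,n} = v^{−Λ_{α,α}n/2 − Σ_β Λ_{α,β}} Σ_{|I|=α} (z_I)^n a_I(z) D_I`, written in terms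
of `w = v^{1/2}` (so `v = w²`, `q = v^{−(r+1)} = w^{−2(r+1)}`); `D_I` rescales `z_i` by
`q·v` for `i ∈ I` and by `v` for `i ∉ I`, i.e. coordinate `i` of `D_I z` is
`v^{|I|}·(q if i∈I else 1)·z_i`. Operators act on functions of `z = (z_1,...,z_{r+1})`. -/
noncomputable def Dop {K : Type*} [Field K] (r : ℕ) (w : K) (α : ℕ) (n : ℤ)
    (f : (Fin (r + 1) → K) → K) : (Fin (r + 1) → K) → K :=
  fun z =>
    w ^ (-(Lam r α α) * n - 2 * ∑ β ∈ Finset.Icc 1 r, Lam r α β) *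
      ∑ I ∈ Finset.powersetCard α (Finset.univ : Finset (Fin (r + 1))),
        (∏ i ∈ I, z i) ^ n * aI z I *
          f (fun i => w ^ ((2 * I.card : ℤ))
              * (if i ∈ I then w ^ (-(2 : ℤ) * ((r : ℤ) + 1)) else 1) * z i)

/-- The raising operator `M_{α,n} = Σ_{|I|=α} (z_I)^n a_I(z) Γ_I`, where `Γ_I`
rescales `z_i ↦ q z_i` for `i ∈ I`. -/
noncomputable def Mop {K : Type*} [Field K] {N : ℕ} (q : K) (α : ℕ) (n : ℤ)
    (f : (Fin N → K) → K) : (Fin N → K) → K :=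
  fun z =>
    ∑ I ∈ Finset.powersetCard α (Finset.univ : Finset (Fin N)),
      (∏ i ∈ I, z i) ^ n * aI z I * f (fun i => (if i ∈ I then q else 1) * z i)

open Finset Matrix Polynomial

namespace Matrix

variable {R : Type*} [CommRing R] {m n : Type*} [DecidableEq n]

/-- Cauchy–Binet, read off from `X ^ |n| * χ (A * B) = X ^ |m| * χ (B * A)` and the expansion of
the coefficients of `χ (B * A)` into principal minors. -/
theorem det_mul_eq_sum_det_submatrix_mul [Fintype m] [Fintype n] [DecidableEq m]
    (A : Matrix m n R) (B : Matrix n m R) :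
    (A * B).det = ∑ s ∈ univ.powersetCard (Fintype.card m),
      ((B * A).submatrix (Subtype.val : s → n) Subtype.val).det := by
  have h := congrArg (coeff · (Fintype.card n)) (charpoly_mul_comm' A B)
  simp only [coeff_X_pow_mul', le_refl, Nat.sub_self, if_true] at h
  rw [det_eq_sign_charpoly_coeff, h]
  split_ifs with hmn
  · rw [charpoly_coeff_eq_sum_minors _ _ hmn, ← mul_assoc, ← mul_pow, neg_one_mul, neg_neg,
      one_pow, one_mul]
  · rw [powersetCard_eq_empty.mpr (by simpa using hmn), sum_empty, mul_zero]

theorem det_submatrix_mul_eq_mul_det {k : ℕ} (B : Matrix n (Fin k) R) (A : Matrix (Fin k) n R)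
    (s : Finset n) (e : Fin k ≃ s) :
    ((B * A).submatrix (Subtype.val : s → n) Subtype.val).det =
      (B.submatrix (fun i => (e i : n)) id).det * (A.submatrix id (fun i => (e i : n))).det := by
  rw [← det_submatrix_equiv_self e, submatrix_submatrix, ← det_mul,
    submatrix_mul _ _ _ _ _ Function.bijective_id]
  rfl

end Matrix

namespace Lagrange

variable {K ι : Type*} [Field K] [Fintype ι] [DecidableEq ι] {z : ι → K}

theorem sum_pow_mul_nodalWeight (hz : Function.Injective z) {e : ℕ} (he : e < Fintype.card ι) :
    ∑ i, z i ^ e * nodalWeight univ z i = if e = Fintype.card ι - 1 then 1 else 0 := by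
  have h := coeff_eq_sum (s := univ) hz.injOn (P := X ^ e) (by
    rw [degree_X_pow, card_univ]; exact_mod_cast he)
  simp only [card_univ, coeff_X_pow, eval_pow, eval_X] at h
  simp only [nodalWeight, prod_inv_distrib, ← div_eq_mul_inv, ← h]
  exact if_congr eq_comm rfl rfl

theorem nodalWeight_mul_prod_erase (hz : Function.Injective z) {S : Finset ι} {x : ι}
    (hx : x ∈ S) :
    nodalWeight univ z x * ∏ y ∈ S.erase x, (z x - z y) = ∏ y ∈ Sᶜ, (z x - z y)⁻¹ := by
  have hsplit : (univ.erase x) \ (S.erase x) = Sᶜ := by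
    ext y
    simp only [mem_sdiff, mem_erase, mem_univ, and_true, mem_compl]
    constructor
    · rintro ⟨hyx, hyS⟩ hy
      exact hyS ⟨hyx, hy⟩
    · rintro hy
      exact ⟨fun hyx => hy (hyx ▸ hx), fun h => hy h.2⟩
  have hcancel : ∏ y ∈ S.erase x, (z x - z y)⁻¹ * (z x - z y) = 1 :=
    prod_eq_one fun y hy => inv_mul_cancel₀ (sub_ne_zero.mpr (hz.ne (ne_of_mem_erase hy).symm))
  rw [nodalWeight, ← prod_sdiff (erase_subset_erase x (subset_univ S)), hsplit, mul_assoc,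
    ← prod_mul_distrib, hcancel, mul_one]

end Lagrange

section PowerSums

open Lagrange

variable {K ι : Type*} [Field K] [DecidableEq ι]

theorem Finset.prod_compl_singleton_comp_equiv {M : Type*} [CommMonoid M] {k : ℕ}
    {S : Finset ι} (e : Fin k ≃ S) (f : ι → M) (i : Fin k) :
    ∏ j ∈ {i}ᶜ, f (e j) = ∏ y ∈ S.erase (e i), f y := by
  refine prod_bij (fun j _ => (e j : ι)) (fun j hj => ?_) (fun a _ b _ h => e.injective
    (Subtype.ext h)) (fun y hy => ?_) (fun _ _ => rfl)
  · rw [mem_compl, mem_singleton] at hj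
    exact mem_erase.mpr ⟨fun h => hj (e.injective (Subtype.ext h)), (e j).2⟩
  · obtain ⟨hyi, hyS⟩ := mem_erase.mp hy
    refine ⟨e.symm ⟨y, hyS⟩, ?_, by simp⟩
    rw [mem_compl, mem_singleton, e.symm_apply_eq]
    exact fun h => hyi (congrArg Subtype.val h)

theorem det_submatrix_rectVandermonde_mul_det_submatrix {k : ℕ} (w z : ι → K) {S : Finset ι}
    (e : Fin k ≃ S) :
    ((rectVandermonde 1 z k).submatrix (fun i => (e i : ι)) id).det *
      ((of fun (a : Fin k) i => w i * z i ^ (a : ℕ)).submatrix id (fun i => (e i : ι))).det =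
    ∏ x ∈ S, (w x * ∏ y ∈ S.erase x, (z x - z y)) := by
  set g : Fin k → ι := fun i => (e i : ι)
  have hA : (of fun (a : Fin k) i => w i * z i ^ (a : ℕ)).submatrix id g =
      of fun a l => w (g l) * (vandermonde (z ∘ g))ᵀ a l := rfl
  rw [show (rectVandermonde 1 z k).submatrix g id = projVandermonde 1 (z ∘ g) from rfl, hA,
    det_mul_row, det_transpose, det_projVandermonde, det_vandermonde, mul_left_comm,
    ← prod_mul_distrib]
  have hoff : ∏ x, (∏ j > x, (1 * z (g x) - 1 * z (g j))) * ∏ j > x, (z (g j) - z (g x)) =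
      ∏ x, ∏ j ∈ {x}ᶜ, (z (g x) - z (g j)) := by
    simp_rw [one_mul, ← prod_mul_distrib]
    exact prod_prod_Ioi_mul_eq_prod_prod_off_diag fun a b => z (g b) - z (g a)
  simp only [Pi.one_apply, Function.comp_apply]
  rw [hoff, ← prod_mul_distrib, prod_congr rfl fun i _ => congrArg (w (g i) * ·)
    (Finset.prod_compl_singleton_comp_equiv e (fun y => z (g i) - z y) i)]
  exact (e.prod_comp (fun x : S => w x * ∏ y ∈ S.erase x, (z x - z y))).trans
    (prod_coe_sort S fun x => w x * ∏ y ∈ S.erase x, (z x - z y))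

variable [Fintype ι] {z : ι → K}

theorem det_nodalWeight_mul_rectVandermonde (hz : Function.Injective z) {m k : ℕ}
    (hk : 0 < k) (hmk : m + k ≤ Fintype.card ι) :
    ((of fun (a : Fin k) i => nodalWeight univ z i * z i ^ m * z i ^ (a : ℕ)) *
      rectVandermonde 1 z k).det = if m + k = Fintype.card ι then 1 else 0 := by
  have hentry : ∀ a b : Fin k, a ≤ b →
      ((of fun (a : Fin k) i => nodalWeight univ z i * z i ^ m * z i ^ (a : ℕ)) *
        rectVandermonde 1 z k) a b =
      if m + a + (k - (b + 1)) = Fintype.card ι - 1 then 1 else 0 := by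
    intro a b hab
    rw [← sum_pow_mul_nodalWeight hz (by omega), mul_apply]
    refine sum_congr rfl fun i _ => ?_
    simp only [of_apply, rectVandermonde_apply, Pi.one_apply, one_pow, one_mul, Fin.val_rev]
    ring
  rw [det_of_isLowerTriangular _ fun a b hab => by
    rw [hentry a b (OrderDual.toDual_lt_toDual.mp hab).le, if_neg (by
      have := OrderDual.toDual_lt_toDual.mp hab; omega)]]
  have hdiag : ∀ a : Fin k, m + a + (k - (a + 1)) = Fintype.card ι - 1 ↔ m + k = Fintype.card ι :=
    fun a => by omega
  simp only [hentry _ _ le_rfl, hdiag, prod_const, card_univ, Fintype.card_fin]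
  split_ifs
  exacts [one_pow k, zero_pow hk.ne']

theorem sum_powersetCard_prod_pow_mul_prod_compl_inv_sub (hz : Function.Injective z) {m k : ℕ}
    (hk : 0 < k) (hmk : m + k ≤ Fintype.card ι) :
    ∑ S ∈ univ.powersetCard k, ∏ x ∈ S, (z x ^ m * ∏ y ∈ Sᶜ, (z x - z y)⁻¹) =
      if m + k = Fintype.card ι then 1 else 0 := by
  rw [← det_nodalWeight_mul_rectVandermonde hz hk hmk,
    det_mul_eq_sum_det_submatrix_mul, Fintype.card_fin]
  refine sum_congr rfl fun S hS => ?_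
  rw [det_submatrix_mul_eq_mul_det _ _ S (equivFinOfCardEq (mem_powersetCard.mp hS).2).symm,
    det_submatrix_rectVandermonde_mul_det_submatrix (fun i => nodalWeight univ z i * z i ^ m)]
  refine prod_congr rfl fun x hx => ?_
  rw [mul_right_comm, nodalWeight_mul_prod_erase hz hx, mul_comm]

end PowerSums

theorem sum_zpow_prod_mul_aI {K : Type*} [Field K] {N k p : ℕ} {z : Fin N → K}
    (hz : Function.Injective z) (hz0 : ∀ i, z i ≠ 0) (hk : 0 < k) (hkp : k + p ≤ N) :
    ∑ I ∈ powersetCard k univ, (∏ i ∈ I, z i) ^ (-(p : ℤ)) * aI z I = if p = 0 then 1 else 0 := by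
  have hterm : ∀ I ∈ powersetCard k univ, (∏ i ∈ I, z i) ^ (-(p : ℤ)) * aI z I =
      ∏ x ∈ I, (z x ^ (N - k - p) * ∏ y ∈ Iᶜ, (z x - z y)⁻¹) := by
    intro I hI
    have hcard : #Iᶜ = N - k := by
      rw [card_compl, Fintype.card_fin, (mem_powersetCard.mp hI).2]
    rw [aI, ← prod_zpow, ← prod_mul_distrib]
    refine prod_congr rfl fun x _ => ?_
    simp_rw [div_eq_mul_inv]
    rw [prod_mul_distrib, prod_const, hcard, ← mul_assoc, ← zpow_natCast, ← zpow_natCast,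
      ← zpow_add₀ (hz0 x)]
    congr 2
    omega
  rw [sum_congr rfl hterm, sum_powersetCard_prod_pow_mul_prod_compl_inv_sub hz hk
    (by rw [Fintype.card_fin]; omega), Fintype.card_fin]
  exact if_congr (by omega) rfl rfl

theorem stmt_16_general {K : Type*} [Field K] (r : ℕ)
    (w : K) (q : K)
    (α : ℕ) (hα1 : 1 ≤ α) (hα : α ≤ r)
    (z : Fin (r + 1) → K) (hz : Function.Injective z) (hz0 : ∀ i, z i ≠ 0) :
    (∀ p : ℕ, 1 ≤ p → α + p ≤ r + 1 →
        Dop r w α (-(p : ℤ)) (fun _ => (1 : K)) z = 0) ∧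
      Dop r w α 0 (fun _ => (1 : K)) z
        = w ^ (-2 * ∑ β ∈ Finset.Icc 1 r, Lam r α β) ∧
      (∀ p : ℕ, 1 ≤ p → α + p ≤ r + 1 →
        Mop q α (-(p : ℤ)) (fun _ => (1 : K)) z = 0) ∧
      Mop q α 0 (fun _ => (1 : K)) z = 1 := by
  have hsum (p : ℕ) (hp : α + p ≤ r + 1) := sum_zpow_prod_mul_aI hz hz0 hα1 hp
  have hsum₀ : ∑ I ∈ powersetCard α univ, (∏ i ∈ I, z i) ^ (0 : ℤ) * aI z I = 1 := by
    simpa using hsum 0 (by omega)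
  simp only [Dop, Mop, mul_one]
  refine ⟨fun p hp hαp => ?_, ?_, fun p hp hαp => ?_, hsum₀⟩
  · rw [hsum p hαp, if_neg (by omega), mul_zero]
  · rw [hsum₀, mul_one, mul_zero, sub_eq_add_neg, zero_add, neg_mul]
  · rw [hsum p hαp, if_neg (by omega)]

/-- for `1 ≤ α ≤ r` and `1 ≤ p ≤ r+1−α`, `𝒟_{α,−p}` annihilates
the constant function `1`, and `𝒟_{α,0}·1 = v^{−Σ_β Λ_{α,β}}`; equivalently
`M_{α,−p}·1 = 0` and `M_{α,0}·1 = 1`. -/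
theorem stmt_16 {K : Type*} [Field K] (r : ℕ) (hr : 1 ≤ r)
    (w : K) (hw : w ≠ 0) (q : K)
    (α : ℕ) (hα1 : 1 ≤ α) (hα : α ≤ r)
    (z : Fin (r + 1) → K) (hz : Function.Injective z) (hz0 : ∀ i, z i ≠ 0) :
    (∀ p : ℕ, 1 ≤ p → α + p ≤ r + 1 →
        Dop r w α (-(p : ℤ)) (fun _ => (1 : K)) z = 0) ∧
      Dop r w α 0 (fun _ => (1 : K)) z
        = w ^ (-2 * ∑ β ∈ Finset.Icc 1 r, Lam r α β) ∧
      (∀ p : ℕ, 1 ≤ p → α + p ≤ r + 1 →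
        Mop q α (-(p : ℤ)) (fun _ => (1 : K)) z = 0) ∧
      Mop q α 0 (fun _ => (1 : K)) z = 1 :=
  stmt_16_general r w q α hα1 hα z hz hz0
end
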